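/- arXiv:math-ph/9810017 — 3 statements merged into one kernel-verified Lean document; each statement's English description precedes it below -/
import Mathlib

section
/- (Isham–Linden–Schreckenberg theorem, uniqueness direction.) Let n ≥ 1 and let 𝔛, 𝔛′ be matrices indexed by (Fin n × Fin n) × (Fin n × Fin n) with complex entries. If tr((p ⊗ q) 𝔛) = tr((p ⊗ q) 𝔛′) for all projection matrices p, q in M_n(ℂ), then 𝔛 = 𝔛′. -/
/-!
Projections span `M_n(ℂ)`: by the spectral theorem a Hermitian matrix is a linear combination
of the projections onto its eigenvectors, and every matrix is `H + iK` with `H`, `K` Hermitian.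
By bilinearity of the Kronecker product the products `p ⊗ q` of projections then span
`M_{n²}(ℂ)`, so the linear functionals `Y ↦ tr(Y 𝔛)` and `Y ↦ tr(Y 𝔛′)` agree everywhere,
and a matrix is determined by these traces.
-/

open Matrix
open scoped Kronecker ComplexStarModule

namespace Matrix

section Projections

variable {n : Type*} [Fintype n] [DecidableEq n]

theorem isStarProjection_single_one {α : Type*} [Semiring α] [StarRing α] (i : n) :
    IsStarProjection (single i i (1 : α)) :=
  ⟨by simp [IsIdempotentElem], by simp [IsSelfAdjoint, star_eq_conjTranspose]⟩

theorem IsHermitian.mem_span_isStarProjection {𝕜 : Type*} [RCLike 𝕜] {A : Matrix n n 𝕜}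
    (hA : A.IsHermitian) : A ∈ Submodule.span 𝕜 {p : Matrix n n 𝕜 | IsStarProjection p} := by
  rw [hA.spectral_theorem, ← sum_single_eq_diagonal, map_sum]
  refine Submodule.sum_mem _ fun i _ => ?_
  rw [← mul_one ((RCLike.ofReal ∘ hA.eigenvalues) i), ← smul_eq_mul, ← smul_single, map_smul]
  exact Submodule.smul_mem _ _ <| Submodule.subset_span <|
    (isStarProjection_single_one (α := 𝕜) i).map _

theorem span_isStarProjection_eq_top :
    Submodule.span ℂ {p : Matrix n n ℂ | IsStarProjection p} = ⊤ := by
  refine Submodule.eq_top_iff'.2 fun A => ?_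
  rw [← realPart_add_I_smul_imaginaryPart A]
  exact add_mem (IsHermitian.mem_span_isStarProjection (ℜ A).2)
    (Submodule.smul_mem _ _ (IsHermitian.mem_span_isStarProjection (ℑ A).2))

end Projections

section Kronecker

variable {R α l m n p : Type*} [CommSemiring R] [Semiring α] [Algebra R α]
  [Fintype l] [Fintype m] [Fintype n] [Fintype p]
  [DecidableEq l] [DecidableEq m] [DecidableEq n] [DecidableEq p]

theorem span_image2_kronecker_eq_top {s : Set (Matrix l m α)} {t : Set (Matrix n p α)}
    (hs : Submodule.span R s = ⊤) (ht : Submodule.span R t = ⊤) :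
    Submodule.span R (Set.image2 (· ⊗ₖ ·) s t) = ⊤ := by
  have hmap : Submodule.map₂ (kroneckerBilinear : Matrix l m α →ₗ[R] Matrix n p α →ₗ[R] _) ⊤ ⊤
      = Submodule.span R (Set.image2 (· ⊗ₖ ·) s t) := by
    rw [← hs, ← ht, Submodule.map₂_span_span]
    rfl
  refine Submodule.eq_top_iff'.2 fun Y => ?_
  rw [matrix_eq_sum_single Y]
  refine Submodule.sum_mem _ fun ⟨i, j⟩ _ => Submodule.sum_mem _ fun ⟨k, k'⟩ _ => ?_
  rw [← mul_one (Y (i, j) (k, k')), ← single_kronecker_single, ← hmap]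
  exact Submodule.apply_mem_map₂ _ trivial trivial

end Kronecker

end Matrix

theorem ILS_uniqueness_general {n : ℕ}
    (X X' : Matrix (Fin n × Fin n) (Fin n × Fin n) ℂ)
    (h : ∀ p q : Matrix (Fin n) (Fin n) ℂ, p.IsHermitian → p * p = p →
      q.IsHermitian → q * q = q →
      ((p ⊗ₖ q) * X).trace = ((p ⊗ₖ q) * X').trace) :
    X = X' := by
  have hspan : Submodule.span ℂ (Set.image2 (· ⊗ₖ ·)
      {p : Matrix (Fin n) (Fin n) ℂ | IsStarProjection p}
      {q : Matrix (Fin n) (Fin n) ℂ | IsStarProjection q}) = ⊤ :=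
    span_image2_kronecker_eq_top span_isStarProjection_eq_top span_isStarProjection_eq_top
  have htrace : traceLinearMap (Fin n × Fin n) ℂ ℂ ∘ₗ LinearMap.mulRight ℂ X =
      traceLinearMap (Fin n × Fin n) ℂ ℂ ∘ₗ LinearMap.mulRight ℂ X' := by
    refine LinearMap.ext_on hspan ?_
    rintro _ ⟨p, hp, q, hq, rfl⟩
    exact h p q hp.isSelfAdjoint hp.isIdempotentElem hq.isSelfAdjoint hq.isIdempotentElem
  exact ext_iff_trace_mul_left.2 (LinearMap.congr_fun htrace)

/-- Isham–Linden–Schreckenberg theorem, uniqueness direction. The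
representing matrix of a decoherence functional on `M_n(ℂ)` is uniquely determined
by its values `tr((p ⊗ q) X)` on pairs of projection matrices. -/
theorem ILS_uniqueness {n : ℕ} (hn : 1 ≤ n)
    (X X' : Matrix (Fin n × Fin n) (Fin n × Fin n) ℂ)
    (h : ∀ p q : Matrix (Fin n) (Fin n) ℂ, p.IsHermitian → p * p = p →
      q.IsHermitian → q * q = q →
      ((p ⊗ₖ q) * X).trace = ((p ⊗ₖ q) * X').trace) :
    X = X' :=
  ILS_uniqueness_general X X' h
end

section
/- (ILS representation of the standard decoherence functional, finite dimensions.) Let n ≥ 1 and m ≥ 1 and let ρ ∈ M_n(ℂ) be positive semidefinite with tr(ρ) = 1. Then there exists a complex matrix 𝔛_ρ indexed by ((Fin m → Fin n) × (Fin m → Fin n)) × ((Fin m → Fin n) × (Fin m → Fin n)) with tr(𝔛_ρ) = 1 such that for all families h, k : Fin m → M_n(ℂ): tr(h_{m-1} ⋯ h_1 h_0 ρ k_0 k_1 ⋯ k_{m-1}) = tr( (K(h) ⊠ K(k)) 𝔛_ρ ), where K(h) is the m-fold Kronecker product of the matrices h_0, …, h_{m-1} and ⊠ denotes the Kronecker product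 of the resulting two matrices. -/
open Matrix
open scoped Kronecker ComplexOrder

section AuxILS

lemma aux_sum_pi_succ {n m : ℕ} (f : (Fin (m+1) → Fin n) → ℂ) :
    ∑ a, f a = ∑ x : Fin n, ∑ a' : Fin m → Fin n, f (Fin.cons x a') := by
  rw [← (Fin.consEquiv (fun _ => Fin n)).sum_comp f, Fintype.sum_prod_type]
  rfl

lemma aux_sum_pi_one {n : ℕ} (f : (Fin 1 → Fin n) → ℂ) :
    ∑ a, f a = ∑ x : Fin n, f (fun _ => x) := by
  rw [← (Equiv.funUnique (Fin 1) (Fin n)).symm.sum_comp f]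
  rfl

lemma aux_sum_pi_succ4 {n m : ℕ}
    (f : (Fin (m+1) → Fin n) → (Fin (m+1) → Fin n) → (Fin (m+1) → Fin n) →
      (Fin (m+1) → Fin n) → ℂ) :
    (∑ a, ∑ c, ∑ b, ∑ d, f a c b d)
      = ∑ a0 : Fin n, ∑ a' : Fin m → Fin n, ∑ c0 : Fin n, ∑ c' : Fin m → Fin n,
        ∑ b0 : Fin n, ∑ b' : Fin m → Fin n, ∑ d0 : Fin n, ∑ d' : Fin m → Fin n,
        f (Fin.cons a0 a') (Fin.cons c0 c') (Fin.cons b0 b') (Fin.cons d0 d') := by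
  rw [aux_sum_pi_succ]
  refine Finset.sum_congr rfl fun a0 _ => Finset.sum_congr rfl fun a' _ => ?_
  rw [aux_sum_pi_succ]
  refine Finset.sum_congr rfl fun c0 _ => Finset.sum_congr rfl fun c' _ => ?_
  rw [aux_sum_pi_succ]
  refine Finset.sum_congr rfl fun b0 _ => Finset.sum_congr rfl fun b' _ => ?_
  rw [aux_sum_pi_succ]

lemma aux_sum_pi_succ4' {n m : ℕ}
    (f : (Fin (m+1) → Fin n) → (Fin (m+1) → Fin n) → (Fin (m+1) → Fin n) →
      (Fin (m+1) → Fin n) → ℂ) :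
    (∑ a, ∑ c, ∑ b, ∑ d, f a c b d)
      = ∑ a' : Fin m → Fin n, ∑ c' : Fin m → Fin n, ∑ b' : Fin m → Fin n,
        ∑ d' : Fin m → Fin n, ∑ c0 : Fin n, ∑ b0 : Fin n, ∑ a0 : Fin n, ∑ d0 : Fin n,
        f (Fin.cons a0 a') (Fin.cons c0 c') (Fin.cons b0 b') (Fin.cons d0 d') := by
  rw [aux_sum_pi_succ4]
  conv_lhs => rw [Finset.sum_comm]
  conv_lhs => enter [2, a']; rw [Finset.sum_comm]
  conv_lhs => enter [2, a', 2, c0]; rw [Finset.sum_comm]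
  conv_lhs => enter [2, a']; rw [Finset.sum_comm]
  conv_lhs => enter [2, a', 2, c', 2, c0]; rw [Finset.sum_comm]
  conv_lhs => enter [2, a', 2, c', 2, c0, 2, b0]; rw [Finset.sum_comm]
  conv_lhs => enter [2, a', 2, c', 2, c0]; rw [Finset.sum_comm]
  conv_lhs => enter [2, a', 2, c']; rw [Finset.sum_comm]
  conv_lhs => enter [2, a', 2, c', 2, b', 2, c0, 2, b0, 2, a0]; rw [Finset.sum_comm]
  conv_lhs => enter [2, a', 2, c', 2, b', 2, c0, 2, b0]; rw [Finset.sum_comm]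
  conv_lhs => enter [2, a', 2, c', 2, b', 2, c0]; rw [Finset.sum_comm]
  conv_lhs => enter [2, a', 2, c', 2, b']; rw [Finset.sum_comm]

lemma aux_collapse {n : ℕ} (y z : Fin n) (C D v : ℂ) (f g : Fin n → ℂ)
    (P Q : Prop) [Decidable P] [Decidable Q] :
    (∑ a0 : Fin n, ∑ d0 : Fin n,
      f a0 * C * (g d0 * D) * (if ((y = a0 ∧ z = d0) ∧ P) ∧ Q then v else 0))
      = f y * C * (g z * D) * (if P ∧ Q then v else 0) := by
  have h1 : ∀ a0 d0 : Fin n,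
      f a0 * C * (g d0 * D) * (if ((y = a0 ∧ z = d0) ∧ P) ∧ Q then v else 0)
        = if z = d0 then (if y = a0 then
            f a0 * C * (g d0 * D) * (if P ∧ Q then v else 0) else 0) else 0 := by
    intro a0 d0
    split_ifs <;> first | tauto | ring
  simp only [h1, Finset.sum_ite_eq, Finset.mem_univ, if_true]

lemma aux_key {n : ℕ} (m : ℕ) (ρ : Matrix (Fin n) (Fin n) ℂ)
    (h k : Fin (m+1) → Matrix (Fin n) (Fin n) ℂ) :
    ((List.ofFn h).reverse.prod * ρ * (List.ofFn k).prod).trace =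
      ∑ a : Fin (m+1) → Fin n, ∑ c : Fin (m+1) → Fin n,
      ∑ b : Fin (m+1) → Fin n, ∑ d : Fin (m+1) → Fin n,
        (∏ i, h i (a i) (c i)) * (∏ i, k i (b i) (d i)) *
          (if ((∀ i : Fin m, c i.succ = a i.castSucc ∧ b i.succ = d i.castSucc)
                ∧ a (Fin.last m) = d (Fin.last m)) then ρ (c 0) (b 0) else 0) := by
  induction m generalizing ρ with
  | zero =>
      simp only [List.ofFn_succ, List.ofFn_zero, List.reverse_cons, List.reverse_nil,
        List.nil_append, List.prod_cons, List.prod_nil, mul_one]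
      rw [trace]
      simp only [diag_apply, mul_apply]
      simp only [aux_sum_pi_succ]
      simp only [Fintype.sum_unique, Fin.prod_univ_succ, Fin.prod_univ_zero, mul_one,
        Fin.cons_zero, IsEmpty.forall_iff, true_and, Fin.last_zero]
      simp only [mul_ite, mul_zero, Finset.sum_ite_eq, Finset.mem_univ, if_true,
        Finset.sum_mul]
      refine Finset.sum_congr rfl fun x _ => ?_
      rw [Finset.sum_comm]
      refine Finset.sum_congr rfl fun y _ => Finset.sum_congr rfl fun z _ => ?_
      ring
  | succ m ih =>
      have e1 : (List.ofFn h).reverse.prod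
          = (List.ofFn (fun i => h i.succ)).reverse.prod * h 0 := by
        rw [List.ofFn_succ]
        simp only [List.reverse_cons, List.prod_append, List.prod_cons, List.prod_nil,
          mul_one]
      have e2 : (List.ofFn k).prod = k 0 * (List.ofFn (fun i => k i.succ)).prod := by
        rw [List.ofFn_succ]; simp only [List.prod_cons]
      rw [e1, e2, show (List.ofFn (fun i => h i.succ)).reverse.prod * h 0 * ρ *
          (k 0 * (List.ofFn (fun i => k i.succ)).prod)
          = (List.ofFn (fun i => h i.succ)).reverse.prod * (h 0 * ρ * k 0) *
            (List.ofFn (fun i => k i.succ)).prod by simp only [mul_assoc],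
        ih (h 0 * ρ * k 0) (fun i => h i.succ) (fun i => k i.succ)]
      conv_rhs => rw [aux_sum_pi_succ4']
      simp only [Fin.prod_univ_succ, Fin.cons_zero, Fin.cons_succ, Fin.forall_fin_succ,
        Fin.castSucc_zero, ← Fin.succ_castSucc, ← Fin.succ_last, mul_apply]
      simp only [aux_collapse]
      refine Finset.sum_congr rfl fun a' _ => Finset.sum_congr rfl fun c' _ =>
        Finset.sum_congr rfl fun b' _ => Finset.sum_congr rfl fun d' _ => ?_
      by_cases hP : (∀ i : Fin m, c' i.succ = a' i.castSucc ∧ b' i.succ = d' i.castSucc)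
          ∧ a' (Fin.last m) = d' (Fin.last m)
      · simp only [hP, and_self, implies_true, if_true]
        simp only [Finset.mul_sum, Finset.sum_mul]
        refine Finset.sum_comm.trans ?_
        refine Finset.sum_congr rfl fun j _ => Finset.sum_congr rfl fun z _ => ?_
        ring
      · simp only [hP, if_false, mul_zero, Finset.sum_const_zero]

end AuxILS

/-- ILS representation of the standard decoherence functional in
finite dimensions: there exists a matrix `X_ρ` of trace one on the (doubled)
`m`-fold Kronecker product space representing the standard decoherence functional
on all homogeneous histories. -/
theorem standard_df_ILS_representation {n m : ℕ} (hn : 1 ≤ n) (hm : 1 ≤ m)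
    (ρ : Matrix (Fin n) (Fin n) ℂ) (hρ : ρ.PosSemidef) (hρtr : ρ.trace = 1) :
    ∃ X : Matrix ((Fin m → Fin n) × (Fin m → Fin n))
        ((Fin m → Fin n) × (Fin m → Fin n)) ℂ,
      X.trace = 1 ∧
      ∀ h k : Fin m → Matrix (Fin n) (Fin n) ℂ,
        ((List.ofFn h).reverse.prod * ρ * (List.ofFn k).prod).trace =
          (((Matrix.of fun a b : Fin m → Fin n => ∏ i, h i (a i) (b i)) ⊗ₖ
            (Matrix.of fun a b : Fin m → Fin n => ∏ i, k i (a i) (b i))) * X).trace := by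
  obtain ⟨m', rfl⟩ : ∃ m', m = m' + 1 := ⟨m - 1, (Nat.succ_pred_eq_of_pos hm).symm⟩
  refine ⟨Matrix.of fun p q =>
      if ((∀ i : Fin m', p.1 i.succ = q.1 i.castSucc ∧ q.2 i.succ = p.2 i.castSucc)
            ∧ q.1 (Fin.last m') = p.2 (Fin.last m'))
        then ρ (p.1 0) (q.2 0) else 0, ?_, ?_⟩
  · -- trace
    rw [trace]
    simp only [diag_apply, of_apply]
    have hpt : ∀ p : (Fin (m'+1) → Fin n) × (Fin (m'+1) → Fin n),
        (if ((∀ i : Fin m', p.1 i.succ = p.1 i.castSucc ∧ p.2 i.succ = p.2 i.castSucc)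
              ∧ p.1 (Fin.last m') = p.2 (Fin.last m')) then ρ (p.1 0) (p.2 0) else 0)
          = ∑ x : Fin n, if ((fun _ => x : Fin (m'+1) → Fin n),
              (fun _ => x : Fin (m'+1) → Fin n)) = p then ρ x x else 0 := by
      intro p
      by_cases hC : (∀ i : Fin m', p.1 i.succ = p.1 i.castSucc ∧ p.2 i.succ = p.2 i.castSucc)
          ∧ p.1 (Fin.last m') = p.2 (Fin.last m')
      · have hconst : ∀ (a : Fin (m'+1) → Fin n),
            (∀ i : Fin m', a i.succ = a i.castSucc) → ∀ j, a j = a 0 := by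
          intro a ha j
          induction j using Fin.induction with
          | zero => rfl
          | succ i ihj => rw [ha i]; exact ihj
        have h1 : ∀ j, p.1 j = p.1 0 := hconst p.1 (fun i => (hC.1 i).1)
        have h2 : ∀ j, p.2 j = p.2 0 := hconst p.2 (fun i => (hC.1 i).2)
        have h12 : p.2 0 = p.1 0 := by rw [← h2 (Fin.last m'), ← hC.2, h1]
        rw [if_pos hC]
        have hx : ∀ x : Fin n,
            (((fun _ => x : Fin (m'+1) → Fin n),
              (fun _ => x : Fin (m'+1) → Fin n)) = p) ↔ (p.1 0 = x) := by
          intro x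
          constructor
          · rintro rfl; rfl
          · rintro rfl
            symm
            refine Prod.ext ?_ ?_ <;> funext j
            · exact h1 j
            · rw [h2 j, h12]
        calc ρ (p.1 0) (p.2 0) = ρ (p.1 0) (p.1 0) := by rw [h12]
          _ = ∑ x : Fin n, if p.1 0 = x then ρ x x else 0 := by
              rw [Finset.sum_ite_eq]; simp
          _ = _ := Finset.sum_congr rfl fun x _ => if_congr (hx x).symm rfl rfl
      · rw [if_neg hC]
        symm
        refine Finset.sum_eq_zero fun x _ => ?_
        rw [if_neg]
        rintro rfl
        exact hC ⟨fun i => ⟨rfl, rfl⟩, rfl⟩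
    simp only [hpt]
    rw [Finset.sum_comm]
    simp only [Finset.sum_ite_eq, Finset.mem_univ, if_true]
    simpa [Matrix.trace, Matrix.diag] using hρtr
  · intro h k
    rw [aux_key]
    rw [trace]
    simp only [diag_apply, mul_apply, kroneckerMap_apply, of_apply]
    rw [Fintype.sum_prod_type]
    conv_rhs => enter [2, a, 2, b]; rw [Fintype.sum_prod_type]
    conv_rhs => enter [2, a]; rw [Finset.sum_comm]
end

section
/- (Tracial boundedness of the standard decoherence functional, finite-dimensional form.) Let n ≥ 1 and m ≥ 1 and let ρ ∈ M_n(ℂ) be positive semidefinite with tr(ρ) = 1. Then the representing matrix 𝔛_ρ can be chosen with ℓ²-operator norm at most one: there exists a complex matrix 𝔛_ρ indexed by ((Fin m → Fin n) × (Fin m → Fin n)) × ((Fin m → Fin n) × (Fin m → Fin n)) with ‖𝔛_ρ‖ ≤ 1 (operator norm induced by the ℓ² norm on the corresponding finite-dimensional coordinate space) such that for all families h, k : Fin m → M_n(ℂ): tr(h_{m-1} ⋯ h_1 h_0 ρ k_0 k_1 ⋯ k_{m-1}) = tr( (K(h) ⊠ K(k)) 𝔛_ρ ). -/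
open Matrix
open scoped Kronecker ComplexOrder

/-!
Expanding `h_{m-1} ⋯ h_0` and `k_0 ⋯ k_{m-1}` entrywise as sums over index paths, the trace
`tr(h_{m-1} ⋯ h_0 ρ k_0 ⋯ k_{m-1})` becomes a sum of entries of `K(h) ⊠ K(k)` in which `ρ` only
couples two initial indices, while all remaining indices are identified along the two paths.
So `𝔛_ρ` can be taken to be `ρ ⊗ 1` with rows and columns permuted: after undoing the
permutations, `tr((K(h) ⊠ K(k)) 𝔛_ρ)` is `tr(P ρ)`, where the partial trace `P` of the reindexed
`K(h) ⊠ K(k)` is exactly `k_0 ⋯ k_{m-1} h_{m-1} ⋯ h_0`. Permutations are isometries, so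
`‖𝔛_ρ‖ = ‖ρ ⊗ 1‖ ≤ 1`, because `0 ≤ ρ ≤ 1` when `ρ` is a density matrix.
-/

namespace Matrix

section Trace

variable {R ι J : Type*} [CommSemiring R] [Fintype ι] [Fintype J]

def partialTrace (M : Matrix (ι × J) (ι × J) R) : Matrix ι ι R :=
  of fun t q => ∑ j, M (t, j) (q, j)

theorem trace_mul_kronecker_one [DecidableEq J] (M : Matrix (ι × J) (ι × J) R)
    (A : Matrix ι ι R) : (M * (A ⊗ₖ (1 : Matrix J J R))).trace = (partialTrace M * A).trace := by
  simp only [trace, diag, mul_apply, partialTrace, of_apply, kroneckerMap_apply, one_apply,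
    Fintype.sum_prod_type, Finset.sum_mul, mul_ite, mul_one, mul_zero, Finset.sum_ite_eq',
    Finset.mem_univ, if_true]
  exact Finset.sum_congr rfl fun t _ => Finset.sum_comm

theorem trace_mul_submatrix_equiv {κ : Type*} [Fintype κ] (M : Matrix κ κ R)
    (A : Matrix ι ι R) (e f : κ ≃ ι) :
    (M * A.submatrix e f).trace = (M.submatrix f.symm e.symm * A).trace := by
  simp only [trace, diag, mul_apply, submatrix_apply]
  rw [← f.symm.sum_comp]
  refine Finset.sum_congr rfl fun i _ => ?_
  rw [← e.symm.sum_comp]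
  simp

def piKronecker {κ : Type*} [Fintype κ] (h : κ → Matrix ι ι R) : Matrix (κ → ι) (κ → ι) R :=
  of fun a b => ∏ i, h i (a i) (b i)

variable [DecidableEq ι]

theorem list_ofFn_prod_apply {m : ℕ} (k : Fin (m + 1) → Matrix ι ι R) (t s : ι) :
    (List.ofFn k).prod t s = ∑ β : Fin m → ι,
      ∏ i, k i ((Fin.cons t β : Fin (m + 1) → ι) i) ((Fin.snoc β s : Fin (m + 1) → ι) i) := by
  induction m generalizing t with
  | zero => simp [Fin.snoc]
  | succ m ih =>
    rw [List.ofFn_succ, List.prod_cons, mul_apply, ← (Fin.consEquiv fun _ => ι).sum_comp,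
      Fintype.sum_prod_type]
    refine Finset.sum_congr rfl fun u _ => ?_
    simp only [Fin.consEquiv, Equiv.coe_fn_mk, ih, Finset.mul_sum, Fin.prod_univ_succ (n := m + 1),
      ← Fin.cons_snoc_eq_snoc_cons, Fin.cons_zero, Fin.cons_succ]

theorem list_ofFn_reverse_prod_apply {m : ℕ} (h : Fin (m + 1) → Matrix ι ι R) (s q : ι) :
    (List.ofFn h).reverse.prod s q = ∑ α : Fin m → ι,
      ∏ i, h i ((Fin.snoc α s : Fin (m + 1) → ι) i) ((Fin.cons q α : Fin (m + 1) → ι) i) := by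
  have htranspose : (List.ofFn h).reverse.prod = ((List.ofFn fun i => (h i)ᵀ).prod)ᵀ := by
    rw [transpose_list_prod, List.map_ofFn]
    simp [Function.comp_def]
  rw [htranspose, transpose_apply, list_ofFn_prod_apply]
  rfl

/- `pathRowEquiv` and `pathColEquiv` send `(t, s, β, α)` resp. `(q, s, β, α)` to the row resp.
column of `K(h) ⊠ K(k)` carrying the summand for the paths `t, β, s` through the `k_i` and
`s, α, q` through the `h_i` in the entry `(t, q)` of `k_0 ⋯ k_{m-1} h_{m-1} ⋯ h_0`. -/
variable (ι) in
@[simps]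
def pathRowEquiv (m : ℕ) :
    ι × ι × (Fin m → ι) × (Fin m → ι) ≃ (Fin (m + 1) → ι) × (Fin (m + 1) → ι) where
  toFun x := (Fin.snoc x.2.2.2 x.2.1, Fin.cons x.1 x.2.2.1)
  invFun p := (p.2 0, p.1 (Fin.last m), Fin.tail p.2, Fin.init p.1)
  left_inv x := by simp
  right_inv p := by simp [Fin.snoc_init_self]

variable (ι) in
@[simps]
def pathColEquiv (m : ℕ) :
    ι × ι × (Fin m → ι) × (Fin m → ι) ≃ (Fin (m + 1) → ι) × (Fin (m + 1) → ι) where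
  toFun x := (Fin.cons x.1 x.2.2.2, Fin.snoc x.2.2.1 x.2.1)
  invFun p := (p.1 0, p.2 (Fin.last m), Fin.init p.2, Fin.tail p.1)
  left_inv x := by simp
  right_inv p := by simp [Fin.snoc_init_self]

theorem partialTrace_submatrix_piKronecker {m : ℕ} (h k : Fin (m + 1) → Matrix ι ι R) :
    partialTrace ((piKronecker h ⊗ₖ piKronecker k).submatrix (pathRowEquiv ι m)
      (pathColEquiv ι m)) = (List.ofFn k).prod * (List.ofFn h).reverse.prod := by
  ext t q
  simp only [partialTrace, of_apply, submatrix_apply, pathRowEquiv_apply, pathColEquiv_apply,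
    kroneckerMap_apply, piKronecker, mul_apply, list_ofFn_prod_apply,
    list_ofFn_reverse_prod_apply, Finset.sum_mul_sum, Fintype.sum_prod_type]
  exact Finset.sum_congr rfl fun s _ => Finset.sum_congr rfl fun β _ =>
    Finset.sum_congr rfl fun α _ => mul_comm _ _

/- The entry at `((c, d), (a, b))` is `ρ (c 0) (b 0)` if `tail c = init a`, `init d = tail b`
and `d (last m) = a (last m)`, and `0` otherwise. -/
def standardDecoherenceMatrix (ρ : Matrix ι ι R) (m : ℕ) :
    Matrix ((Fin (m + 1) → ι) × (Fin (m + 1) → ι)) ((Fin (m + 1) → ι) × (Fin (m + 1) → ι)) R :=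
  (ρ ⊗ₖ (1 : Matrix (ι × (Fin m → ι) × (Fin m → ι)) _ R)).submatrix
    (pathColEquiv ι m).symm (pathRowEquiv ι m).symm

theorem trace_list_prod_mul_eq_trace_mul_standardDecoherenceMatrix {m : ℕ}
    (ρ : Matrix ι ι R) (h k : Fin (m + 1) → Matrix ι ι R) :
    ((List.ofFn h).reverse.prod * ρ * (List.ofFn k).prod).trace =
      ((piKronecker h ⊗ₖ piKronecker k) * standardDecoherenceMatrix ρ m).trace := by
  rw [standardDecoherenceMatrix, trace_mul_submatrix_equiv, Equiv.symm_symm, Equiv.symm_symm,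
    trace_mul_kronecker_one, partialTrace_submatrix_piKronecker, trace_mul_cycle]

end Trace

section Norm

open scoped Matrix.Norms.L2Operator MatrixOrder

variable {ι J : Type*} [Fintype ι] [DecidableEq ι] [Fintype J] [DecidableEq J]

theorem PosSemidef.le_one_of_trace_eq_one {ρ : Matrix ι ι ℂ} (hρ : ρ.PosSemidef)
    (hρtr : ρ.trace = 1) : ρ ≤ 1 := by
  refine CFC.le_one (R := ℝ) fun x hx => ?_
  rw [hρ.1.spectrum_real_eq_range_eigenvalues] at hx
  obtain ⟨i, rfl⟩ := hx
  have hsum : ∑ j, hρ.1.eigenvalues j = 1 := by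
    simpa [hρtr] using congrArg Complex.re hρ.1.trace_eq_sum_eigenvalues.symm
  exact hsum ▸ Finset.single_le_sum (fun j _ => hρ.eigenvalues_nonneg j) (Finset.mem_univ i)

theorem l2_opNorm_kronecker_one_le_one {ρ : Matrix ι ι ℂ} (h0 : 0 ≤ ρ) (h1 : ρ ≤ 1) :
    ‖ρ ⊗ₖ (1 : Matrix J J ℂ)‖ ≤ 1 := by
  have hsub : (1 - ρ) ⊗ₖ (1 : Matrix J J ℂ) = 1 - ρ ⊗ₖ 1 := by
    rw [← one_kronecker_one (α := ℂ) (m := ι) (n := J)]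
    ext ⟨i, j⟩ ⟨i', j'⟩
    simp only [kroneckerMap_apply, Matrix.sub_apply, sub_mul]
  rw [nonneg_iff_posSemidef] at h0
  rw [le_iff] at h1
  refine (CStarAlgebra.norm_le_one_iff_of_nonneg _ ?_).2 ?_
  · exact (h0.kronecker PosSemidef.one).nonneg
  · rw [le_iff, ← hsub]
    exact h1.kronecker PosSemidef.one

theorem l2_opNorm_submatrix_equiv {κ : Type*} [Fintype κ] [DecidableEq κ] (A : Matrix ι ι ℂ)
    (e f : κ ≃ ι) : ‖A.submatrix e f‖ = ‖A‖ := by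
  have hconj : toEuclideanCLM (𝕜 := ℂ) (A.submatrix e f) =
      ((LinearIsometryEquiv.piLpCongrLeft 2 ℂ ℂ e.symm).toContinuousLinearEquiv.toContinuousLinearMap
        |>.comp (toEuclideanCLM (𝕜 := ℂ) A)).comp
        (LinearIsometryEquiv.piLpCongrLeft 2 ℂ ℂ f).toContinuousLinearEquiv.toContinuousLinearMap := by
    ext v i
    simp only [ofLp_toEuclideanCLM, submatrix_mulVec_equiv, Function.comp_apply,
      ContinuousLinearMap.comp_apply, ContinuousLinearEquiv.coe_coe,
      LinearIsometryEquiv.coe_toContinuousLinearEquiv, LinearIsometryEquiv.piLpCongrLeft_apply,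
      Equiv.piCongrLeft'_apply, Equiv.symm_symm]
    rfl
  rw [cstar_norm_def, cstar_norm_def, hconj, ContinuousLinearMap.opNorm_comp_linearIsometryEquiv,
    ContinuousLinearMap.opNorm_linearIsometryEquiv_comp]

theorem l2_opNorm_standardDecoherenceMatrix_le_one {ρ : Matrix ι ι ℂ} (hρ : ρ.PosSemidef)
    (hρtr : ρ.trace = 1) (m : ℕ) : ‖standardDecoherenceMatrix ρ m‖ ≤ 1 := by
  rw [standardDecoherenceMatrix, l2_opNorm_submatrix_equiv]
  exact l2_opNorm_kronecker_one_le_one hρ.nonneg (hρ.le_one_of_trace_eq_one hρtr)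

end Norm

end Matrix

theorem standard_df_tracially_bounded_general {n m : ℕ} (hm : 1 ≤ m)
    (ρ : Matrix (Fin n) (Fin n) ℂ) (hρ : ρ.PosSemidef) (hρtr : ρ.trace = 1) :
    ∃ X : Matrix ((Fin m → Fin n) × (Fin m → Fin n))
        ((Fin m → Fin n) × (Fin m → Fin n)) ℂ,
      ‖Matrix.toEuclideanCLM (𝕜 := ℂ) X‖ ≤ 1 ∧
      ∀ h k : Fin m → Matrix (Fin n) (Fin n) ℂ,
        ((List.ofFn h).reverse.prod * ρ * (List.ofFn k).prod).trace =
          (((Matrix.of fun a b : Fin m → Fin n => ∏ i, h i (a i) (b i)) ⊗ₖ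
            (Matrix.of fun a b : Fin m → Fin n => ∏ i, k i (a i) (b i))) * X).trace := by
  obtain ⟨m, rfl⟩ := Nat.exists_eq_add_of_le' hm
  exact ⟨standardDecoherenceMatrix ρ m,
    l2_opNorm_standardDecoherenceMatrix_le_one hρ hρtr m,
    trace_list_prod_mul_eq_trace_mul_standardDecoherenceMatrix ρ⟩

/-- Tracial boundedness of the standard decoherence functional in
finite dimensions: the representing matrix `X_ρ` can be chosen with ℓ²-operator
norm at most one. -/
theorem standard_df_tracially_bounded {n m : ℕ} (hn : 1 ≤ n) (hm : 1 ≤ m)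
    (ρ : Matrix (Fin n) (Fin n) ℂ) (hρ : ρ.PosSemidef) (hρtr : ρ.trace = 1) :
    ∃ X : Matrix ((Fin m → Fin n) × (Fin m → Fin n))
        ((Fin m → Fin n) × (Fin m → Fin n)) ℂ,
      ‖Matrix.toEuclideanCLM (𝕜 := ℂ) X‖ ≤ 1 ∧
      ∀ h k : Fin m → Matrix (Fin n) (Fin n) ℂ,
        ((List.ofFn h).reverse.prod * ρ * (List.ofFn k).prod).trace =
          (((Matrix.of fun a b : Fin m → Fin n => ∏ i, h i (a i) (b i)) ⊗ₖ
            (Matrix.of fun a b : Fin m → Fin n => ∏ i, k i (a i) (b i))) * X).trace :=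
  standard_df_tracially_bounded_general hm ρ hρ hρtr
end
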